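/- arXiv:1707.02568 — 2 statements merged into one kernel-verified Lean document; each statement's English description precedes it below -/
import Mathlib

section
/- Let d be a positive natural number, T > 0, λ > 0, and let g : ℝ^d → ℝ be a bounded continuous function. Define u : (-∞, T) × ℝ^d → ℝ by u(t,x) = -(1/λ) log ( ∫_{ℝ^d} exp(-λ g(x + √(2(T-t)) · z)) dγ(z) ), where γ is the standard Gaussian measure on ℝ^d. Then for every x ∈ ℝ^d, u(t,x) converges to g(x) as t tends to T from the left; that is, u attains the terminal condition u(T,·) = g continuously. -/
open Real MeasureTheory ProbabilityTheory Filter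

/-- The standard Gaussian measure on `ℝ^d` (mean `0`, identity covariance). -/
noncomputable def stdGaussian (d : ℕ) : Measure (EuclideanSpace ℝ (Fin d)) :=
  (Measure.pi fun _ : Fin d => gaussianReal 0 1).map
    (MeasurableEquiv.toLp 2 (Fin d → ℝ))

/-! As `t → T⁻` the noise scale `√(2(T-t))` vanishes, so by dominated convergence (the
integrand is bounded by `exp (λ C)`) the Gaussian average of `exp (-λ g)` around `x` tends to
`exp (-λ g x)`; continuity of `log` at this positive value gives `u(t,x) → g x`. -/

instance stdGaussian.isProbabilityMeasure (d : ℕ) : IsProbabilityMeasure (stdGaussian d) :=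
  Measure.isProbabilityMeasure_map (MeasurableEquiv.measurable _).aemeasurable

theorem tendsto_integral_comp_add_smul_zero {E F : Type*}
    [NormedAddCommGroup E] [NormedSpace ℝ E] [MeasurableSpace E] [OpensMeasurableSpace E]
    [SecondCountableTopology E] [NormedAddCommGroup F] [NormedSpace ℝ F] [CompleteSpace F]
    (μ : Measure E) [IsProbabilityMeasure μ] {f : E → F} (hf : Continuous f) {C : ℝ}
    (hfC : ∀ y, ‖f y‖ ≤ C) (x : E) :
    Tendsto (fun s : ℝ => ∫ z, f (x + s • z) ∂μ) (nhds 0) (nhds (f x)) := by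
  have hlim : Tendsto (fun s : ℝ => ∫ z, f (x + s • z) ∂μ) (nhds 0) (nhds (∫ _z, f x ∂μ)) := by
    refine tendsto_integral_filter_of_dominated_convergence (fun _ => C) ?_ ?_
      (integrable_const C) ?_
    · exact .of_forall fun s => (hf.comp (by fun_prop)).aestronglyMeasurable
    · exact .of_forall fun s => .of_forall fun z => hfC _
    · refine .of_forall fun z => ?_
      have hcont : Continuous fun s : ℝ => f (x + s • z) := hf.comp (by fun_prop)
      simpa using hcont.tendsto 0
  rwa [integral_const, probReal_univ, one_smul] at hlim

theorem explicit_formula_attains_terminal_condition_general (d : ℕ)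
    (T : ℝ) (lam : ℝ) (hlam : 0 < lam)
    (g : EuclideanSpace ℝ (Fin d) → ℝ) (hg : Continuous g)
    (C : ℝ) (hbd : ∀ x, |g x| ≤ C)
    (u : ℝ → EuclideanSpace ℝ (Fin d) → ℝ)
    (hu : ∀ t : ℝ, ∀ x : EuclideanSpace ℝ (Fin d),
      u t x = -(1 / lam) * Real.log
        (∫ z, Real.exp (-lam * g (x + Real.sqrt (2 * (T - t)) • z)) ∂(stdGaussian d))) :
    ∀ x : EuclideanSpace ℝ (Fin d),
      Tendsto (fun t => u t x) (nhdsWithin T (Set.Iio T)) (nhds (g x)) := by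
  intro x
  have hexp_bound : ∀ y, ‖Real.exp (-lam * g y)‖ ≤ Real.exp (lam * C) := fun y => by
    rw [Real.norm_eq_abs, Real.abs_exp, Real.exp_le_exp]
    nlinarith [abs_le.mp (hbd y)]
  have hscale : Tendsto (fun t => Real.sqrt (2 * (T - t))) (nhdsWithin T (Set.Iio T)) (nhds 0) :=
    ((by fun_prop : Continuous fun t => Real.sqrt (2 * (T - t))).tendsto' T 0
      (by simp)).mono_left nhdsWithin_le_nhds
  have hintegral := (tendsto_integral_comp_add_smul_zero (stdGaussian d)
    (by fun_prop : Continuous fun y => Real.exp (-lam * g y)) hexp_bound x).comp hscale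
  have hlog := ((Real.continuousAt_log (Real.exp_pos _).ne').tendsto.comp hintegral).const_mul
    (-(1 / lam))
  rw [Real.log_exp, show -(1 / lam) * (-lam * g x) = g x by field_simp] at hlog
  exact hlog.congr fun t => (hu t x).symm

/-- For bounded continuous `g`, the explicit HJB solution
`u(t,x) = -(1/λ) log ∫ exp(-λ g(x + √(2(T-t)) z)) dγ(z)` attains the terminal
condition: for every `x`, `u(t,x) → g(x)` as `t → T⁻`. -/
theorem explicit_formula_attains_terminal_condition (d : ℕ) (hd : 0 < d)
    (T : ℝ) (hT : 0 < T) (lam : ℝ) (hlam : 0 < lam)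
    (g : EuclideanSpace ℝ (Fin d) → ℝ) (hg : Continuous g)
    (C : ℝ) (hbd : ∀ x, |g x| ≤ C)
    (u : ℝ → EuclideanSpace ℝ (Fin d) → ℝ)
    (hu : ∀ t : ℝ, ∀ x : EuclideanSpace ℝ (Fin d),
      u t x = -(1 / lam) * Real.log
        (∫ z, Real.exp (-lam * g (x + Real.sqrt (2 * (T - t)) • z)) ∂(stdGaussian d))) :
    ∀ x : EuclideanSpace ℝ (Fin d),
      Tendsto (fun t => u t x) (nhdsWithin T (Set.Iio T)) (nhds (g x)) :=
  explicit_formula_attains_terminal_condition_general d T lam hlam g hg C hbd u hu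
end

section
/- Let d be a positive natural number, λ > 0, T > 0, and let g : ℝ^d → ℝ be a bounded continuous function. For each t < T and x ∈ ℝ^d define v(t,x) = ∫_{ℝ^d} exp(-λ g(x + √(2(T-t)) · z)) dγ(z), where γ is the standard Gaussian measure on ℝ^d. Then for every fixed x ∈ ℝ^d, the map t ↦ v(t,x) is continuous on (-∞, T) and converges to exp(-λ g(x)) as t tends to T from the left. -/
/-! Write `v(t, x) = F(√(2(T - t)))` with `F(s) = ∫ exp(-λ g(x + s z)) dγ(z)`. The integrand is
bounded by `exp(|λ| C)` and continuous in `s`, so dominated convergence makes `F` continuous,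
and `F(0) = exp(-λ g(x))` because `γ` is a probability measure. -/

open Real MeasureTheory ProbabilityTheory Filter

instance stdGaussian.instIsProbabilityMeasure (d : ℕ) :
    IsProbabilityMeasure (stdGaussian d) :=
  Measure.isProbabilityMeasure_map (MeasurableEquiv.toLp 2 (Fin d → ℝ)).measurable.aemeasurable

section ScaledAverage

variable {E F : Type*} [NormedAddCommGroup E] [NormedSpace ℝ E] [MeasurableSpace E]
  [NormedAddCommGroup F] [NormedSpace ℝ F]

theorem continuous_integral_comp_add_smul [OpensMeasurableSpace E] [SecondCountableTopology E]
    (μ : Measure E) [IsFiniteMeasure μ] {f : E → F} (hf : Continuous f) {M : ℝ}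
    (hM : ∀ y, ‖f y‖ ≤ M) (x : E) :
    Continuous fun s : ℝ => ∫ z, f (x + s • z) ∂μ :=
  continuous_of_dominated (bound := fun _ => M)
    (fun _ => by fun_prop) (fun _ => ae_of_all _ fun _ => hM _) (integrable_const M)
    (ae_of_all _ fun _ => by fun_prop)

theorem integral_comp_add_zero_smul [CompleteSpace F] (μ : Measure E) [IsProbabilityMeasure μ]
    (f : E → F) (x : E) : ∫ z, f (x + (0 : ℝ) • z) ∂μ = f x := by
  simp

end ScaledAverage

theorem exp_neg_mul_le_exp_abs_mul {lam a C : ℝ} (ha : |a| ≤ C) :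
    Real.exp (-lam * a) ≤ Real.exp (|lam| * C) := by
  refine Real.exp_le_exp.2 ?_
  calc -lam * a ≤ |-lam * a| := le_abs_self _
    _ = |lam| * |a| := by rw [abs_mul, abs_neg]
    _ ≤ |lam| * C := by gcongr

theorem cole_hopf_transform_continuous_up_to_terminal_time_general
    (d : ℕ) (lam : ℝ) (T : ℝ)
    (g : EuclideanSpace ℝ (Fin d) → ℝ) (hg : Continuous g)
    (C : ℝ) (hbd : ∀ x, |g x| ≤ C)
    (v : ℝ → EuclideanSpace ℝ (Fin d) → ℝ)
    (hv : ∀ t : ℝ, ∀ x : EuclideanSpace ℝ (Fin d),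
      v t x = ∫ z, Real.exp (-lam * g (x + Real.sqrt (2 * (T - t)) • z)) ∂(stdGaussian d)) :
    ∀ x : EuclideanSpace ℝ (Fin d),
      ContinuousOn (fun t => v t x) (Set.Iio T) ∧
      Tendsto (fun t => v t x) (nhdsWithin T (Set.Iio T))
        (nhds (Real.exp (-lam * g x))) := by
  intro x
  have hbound (y : EuclideanSpace ℝ (Fin d)) :
      ‖Real.exp (-lam * g y)‖ ≤ Real.exp (|lam| * C) := by
    rw [Real.norm_of_nonneg (Real.exp_nonneg _)]
    exact exp_neg_mul_le_exp_abs_mul (hbd y)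
  have haverage := continuous_integral_comp_add_smul (stdGaussian d) (by fun_prop) hbound x
  have hscale : Continuous fun t : ℝ => Real.sqrt (2 * (T - t)) := by fun_prop
  have hscale_terminal : Tendsto (fun t : ℝ => Real.sqrt (2 * (T - t)))
      (nhdsWithin T (Set.Iio T)) (nhds 0) :=
    (hscale.tendsto' T 0 (by simp)).mono_left nhdsWithin_le_nhds
  simp_rw [hv]
  refine ⟨(haverage.comp hscale).continuousOn, ?_⟩
  have hterminal := (haverage.tendsto 0).comp hscale_terminal
  rwa [integral_comp_add_zero_smul _ (fun y => Real.exp (-lam * g y))] at hterminal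

/-- For bounded continuous `g`, the Cole-Hopf transform
`v(t,x) = ∫ exp(-λ g(x + √(2(T-t)) z)) dγ(z)` is, for each fixed `x`, continuous in
`t` on `(-∞,T)` and converges to `exp(-λ g(x))` as `t → T⁻`. -/
theorem cole_hopf_transform_continuous_up_to_terminal_time
    (d : ℕ) (hd : 0 < d) (lam : ℝ) (hlam : 0 < lam) (T : ℝ) (hT : 0 < T)
    (g : EuclideanSpace ℝ (Fin d) → ℝ) (hg : Continuous g)
    (C : ℝ) (hbd : ∀ x, |g x| ≤ C)
    (v : ℝ → EuclideanSpace ℝ (Fin d) → ℝ)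
    (hv : ∀ t : ℝ, ∀ x : EuclideanSpace ℝ (Fin d),
      v t x = ∫ z, Real.exp (-lam * g (x + Real.sqrt (2 * (T - t)) • z)) ∂(stdGaussian d)) :
    ∀ x : EuclideanSpace ℝ (Fin d),
      ContinuousOn (fun t => v t x) (Set.Iio T) ∧
      Tendsto (fun t => v t x) (nhdsWithin T (Set.Iio T))
        (nhds (Real.exp (-lam * g x))) :=
  cole_hopf_transform_continuous_up_to_terminal_time_general d lam T g hg C hbd v hv
end
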